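/- Let Ω ⊂ ℝⁿ be an open set with finite measure and let U ⊂ Ω be a subset of positive measure such that |Ω \ U|/|Ω| ≤ α(Ω)/4. Then α(U) ≥ α(Ω)/2. -/

import Mathlib

open MeasureTheory Metric Set Filter
open scoped ENNReal symmDiff Topology

noncomputable section

/-- The distribution function `μ(t) = |{x ∈ A : |u(x)| > t}|` of `u` relative to a set `A`. -/
def distFun {α : Type*} [MeasureSpace α] (A : Set α) (u : α → ℝ) (t : ℝ) : ℝ :=
  (volume {x ∈ A | t < |u x|}).toReal

/-- The decreasing rearrangement `u*(s) = inf {t ≥ 0 : μ(t) < s}`. -/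
def decRear {α : Type*} [MeasureSpace α] (A : Set α) (u : α → ℝ) (s : ℝ) : ℝ :=
  sInf {t : ℝ | 0 ≤ t ∧ distFun A u t < s}

/-- `ω_n`, the Lebesgue measure of the unit ball of `ℝⁿ`. -/
def unitBallVol (n : ℕ) : ℝ := (volume (ball (0 : EuclideanSpace ℝ (Fin n)) 1)).toReal

variable {n : ℕ}

/-- The radius of the centered ball having the same measure as `Ω`. -/
def symRad (Ω : Set (EuclideanSpace ℝ (Fin n))) : ℝ :=
  ((volume Ω).toReal / unitBallVol n) ^ ((1 : ℝ) / n)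

/-- `Ω^♯`, the ball centered at the origin with the same Lebesgue measure as `Ω`. -/
def ballSym (Ω : Set (EuclideanSpace ℝ (Fin n))) : Set (EuclideanSpace ℝ (Fin n)) :=
  ball (0 : EuclideanSpace ℝ (Fin n)) (symRad Ω)

/-- The Schwarz (spherically symmetric decreasing) rearrangement
`u^♯(x) = u*(ω_n |x|ⁿ)` of `u`. -/
def schwarz (Ω : Set (EuclideanSpace ℝ (Fin n))) (u : EuclideanSpace ℝ (Fin n) → ℝ)
    (x : EuclideanSpace ℝ (Fin n)) : ℝ :=
  decRear Ω u (unitBallVol n * ‖x‖ ^ n)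

/-- The increasing rearrangement `f_♯` of `f`, defined on `Ω^♯`:
the spherically symmetric function, increasing in `|x|`, equidistributed with `f`. -/
def incRear (Ω : Set (EuclideanSpace ℝ (Fin n))) (f : EuclideanSpace ℝ (Fin n) → ℝ)
    (x : EuclideanSpace ℝ (Fin n)) : ℝ :=
  decRear Ω f ((volume Ω).toReal - unitBallVol n * ‖x‖ ^ n)

/-- The Fraenkel asymmetry index
`α(Ω) = min_x { |Ω △ B_r(x)| / |B_r(x)| : |B_r(x)| = |Ω| }`. -/
def asym (Ω : Set (EuclideanSpace ℝ (Fin n))) : ℝ :=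
  ⨅ x : EuclideanSpace ℝ (Fin n),
    (volume (Ω ∆ ball x (symRad Ω))).toReal / (volume (ball x (symRad Ω))).toReal

/-- The norm of the (a.e. defined) gradient, `|∇u|(x)`. -/
def gradNorm (u : EuclideanSpace ℝ (Fin n) → ℝ) (x : EuclideanSpace ℝ (Fin n)) : ℝ :=
  ‖fderiv ℝ u x‖

/-- `u ∈ W^{1,1}_0(Ω)` solves `|∇u| = f` a.e. in `Ω`, with `u = 0` on `∂Ω`
(`u` is extended by zero outside `Ω`). -/
def IsHJSol (Ω : Set (EuclideanSpace ℝ (Fin n))) (f u : EuclideanSpace ℝ (Fin n) → ℝ) : Prop :=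
  (∀ x ∉ Ω, u x = 0) ∧ IntegrableOn u Ω ∧ IntegrableOn (gradNorm u) Ω ∧
    ∀ᵐ x ∂volume.restrict Ω, DifferentiableAt ℝ u x ∧ gradNorm u x = f x

/-- A spherically symmetric function, decreasing in `|x|`. -/
def IsRadDec (u : EuclideanSpace ℝ (Fin n) → ℝ) : Prop :=
  ∃ φ : ℝ → ℝ, AntitoneOn φ (Ici 0) ∧ ∀ x, u x = φ ‖x‖

/-!
Compare `Ω` with `U`, and the ball `B_Ω(x)` of volume `|Ω|` with the concentric ball `B_U(x)` of
volume `|U|`. Both `|Ω △ U|` and `|B_Ω(x) △ B_U(x)| = |Ω| - |U|` are at most `|Ω \ U|`, so the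
triangle inequality for `△` gives `|Ω △ B_Ω(x)| ≤ |U △ B_U(x)| + 2 |Ω \ U|`. Hence
`|U △ B_U(x)| ≥ α(Ω)|Ω| - 2|Ω \ U| ≥ α(Ω)|Ω|/2 ≥ α(Ω)|U|/2` for every centre `x`.
-/

theorem measureReal_symmDiff_le_add_two_mul_symmDiff {α : Type*} [MeasurableSpace α]
    {μ : Measure α} {Ω U B B' : Set α} (hB'B : B' ⊆ B)
    (hB'm : MeasurableSet B') (hB : μ B = μ Ω) (hB' : μ B' = μ U) (hΩ : μ Ω ≠ ∞) :
    μ.real (Ω ∆ B) ≤ μ.real (U ∆ B') + 2 * μ.real (Ω ∆ U) := by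
  have hBf : μ B ≠ ∞ := hB ▸ hΩ
  have hB'f : μ B' ≠ ∞ := measure_ne_top_of_subset hB'B hBf
  have hUf : μ U ≠ ∞ := hB' ▸ hB'f
  have hradii : μ.real (B' ∆ B) ≤ μ.real (Ω ∆ U) := by
    rw [symmDiff_of_le hB'B, measureReal_sdiff hB'B hB'm hBf]
    calc μ.real B - μ.real B' = μ.real Ω - μ.real U := by simp only [measureReal_def, hB, hB']
      _ ≤ μ.real (Ω \ U) := le_measureReal_sdiff hUf
      _ ≤ μ.real (Ω ∆ U) :=
        measureReal_mono (fun _ hx => Or.inl hx) (measure_symmDiff_ne_top hΩ hUf)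
  calc μ.real (Ω ∆ B) ≤ μ.real (Ω ∆ U) + μ.real (U ∆ B) :=
        measureReal_symmDiff_le (t := U) B hΩ hUf
    _ ≤ μ.real (Ω ∆ U) + (μ.real (U ∆ B') + μ.real (B' ∆ B)) := by
        gcongr
        exact measureReal_symmDiff_le (t := B') B hUf hB'f
    _ ≤ μ.real (U ∆ B') + 2 * μ.real (Ω ∆ U) := by linarith

theorem unitBallVol_pos (n : ℕ) : 0 < unitBallVol n :=
  ENNReal.toReal_pos (measure_ball_pos volume 0 one_pos).ne' measure_ball_lt_top.ne

section Asymmetry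

variable {S T : Set (EuclideanSpace ℝ (Fin n))}

theorem symRad_pos (hS0 : volume S ≠ 0) (hS : volume S ≠ ∞) : 0 < symRad S :=
  Real.rpow_pos_of_pos (div_pos (ENNReal.toReal_pos hS0 hS) (unitBallVol_pos n)) _

theorem symRad_mono (h : volume.real S ≤ volume.real T) : symRad S ≤ symRad T :=
  Real.rpow_le_rpow (div_nonneg ENNReal.toReal_nonneg (unitBallVol_pos n).le)
    (div_le_div_of_nonneg_right h (unitBallVol_pos n).le) (by positivity)

theorem volume_ball_symRad (hS0 : volume S ≠ 0) (hS : volume S ≠ ∞)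
    (x : EuclideanSpace ℝ (Fin n)) :
    volume (ball x (symRad S)) = volume S := by
  rcases n.eq_zero_or_pos with rfl | hn
  · have hball : ball x (symRad S) = univ := eq_univ_of_forall fun y => by
      rw [mem_ball, Subsingleton.elim y x, dist_self]
      exact symRad_pos hS0 hS
    rw [hball, (nonempty_of_measure_ne_zero hS0).eq_univ]
  · have hω : volume (ball (0 : EuclideanSpace ℝ (Fin n)) 1) = ENNReal.ofReal (unitBallVol n) :=
      (ENNReal.ofReal_toReal measure_ball_lt_top.ne).symm
    have hquot : 0 ≤ (volume S).toReal / unitBallVol n :=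
      div_nonneg ENNReal.toReal_nonneg (unitBallVol_pos n).le
    rw [Measure.addHaar_ball_of_pos _ _ (symRad_pos hS0 hS), finrank_euclideanSpace_fin, symRad,
      ← Real.rpow_natCast, ← Real.rpow_mul hquot, one_div_mul_cancel (by positivity),
      Real.rpow_one, hω, ← ENNReal.ofReal_mul hquot, div_mul_cancel₀ _ (unitBallVol_pos n).ne',
      ENNReal.ofReal_toReal hS]

theorem asym_nonneg (S : Set (EuclideanSpace ℝ (Fin n))) : 0 ≤ asym S :=
  Real.iInf_nonneg fun _ => div_nonneg ENNReal.toReal_nonneg ENNReal.toReal_nonneg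

theorem asym_mul_le_measureReal_symmDiff (hS0 : volume S ≠ 0) (hS : volume S ≠ ∞)
    (x : EuclideanSpace ℝ (Fin n)) :
    asym S * volume.real S ≤ volume.real (S ∆ ball x (symRad S)) := by
  have hbdd : BddBelow (range fun y : EuclideanSpace ℝ (Fin n) =>
      (volume (S ∆ ball y (symRad S))).toReal / (volume (ball y (symRad S))).toReal) :=
    ⟨0, forall_mem_range.2 fun _ => div_nonneg ENNReal.toReal_nonneg ENNReal.toReal_nonneg⟩
  have hle := ciInf_le hbdd x
  rw [volume_ball_symRad hS0 hS] at hle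
  exact (le_div_iff₀ (ENNReal.toReal_pos hS0 hS)).1 hle

theorem le_asym {c : ℝ} (hS0 : volume S ≠ 0) (hS : volume S ≠ ∞)
    (h : ∀ x, c * volume.real S ≤ volume.real (S ∆ ball x (symRad S))) : c ≤ asym S :=
  le_ciInf fun x => by
    rw [volume_ball_symRad hS0 hS]
    exact (le_div_iff₀ (ENNReal.toReal_pos hS0 hS)).2 (h x)

end Asymmetry

theorem asymmetry_propagation_general (n : ℕ)
    (Ω U : Set (EuclideanSpace ℝ (Fin n))) (hΩf : volume Ω < ⊤)
    (hUΩ : U ⊆ Ω) (hUpos : 0 < volume U)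
    (h : (volume (Ω \ U)).toReal / (volume Ω).toReal ≤ asym Ω / 4) :
    asym Ω / 2 ≤ asym U := by
  have hΩ0 : volume Ω ≠ 0 := (hUpos.trans_le (measure_mono hUΩ)).ne'
  have hU : volume U ≠ ∞ := measure_ne_top_of_subset hUΩ hΩf.ne
  have hUΩ' : volume.real U ≤ volume.real Ω := measureReal_mono hUΩ hΩf.ne
  simp only [← measureReal_def] at h
  have hΩpos : 0 < volume.real Ω := ENNReal.toReal_pos hΩ0 hΩf.ne
  have hsdiff : 2 * volume.real (Ω \ U) ≤ asym Ω / 2 * volume.real Ω := by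
    linarith [(div_le_iff₀ hΩpos).1 h]
  refine le_asym hUpos.ne' hU fun x => ?_
  have hballs := measureReal_symmDiff_le_add_two_mul_symmDiff
    (ball_subset_ball (symRad_mono hUΩ')) measurableSet_ball
    (volume_ball_symRad hΩ0 hΩf.ne x) (volume_ball_symRad hUpos.ne' hU x) hΩf.ne
  rw [symmDiff_of_ge hUΩ] at hballs
  have hasym := asym_mul_le_measureReal_symmDiff hΩ0 hΩf.ne x
  calc asym Ω / 2 * volume.real U ≤ asym Ω / 2 * volume.real Ω := by
        gcongr
        linarith [asym_nonneg Ω]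
    _ ≤ asym Ω * volume.real Ω - 2 * volume.real (Ω \ U) := by linarith
    _ ≤ volume.real (U ∆ ball x (symRad U)) := by linarith

/-- Lemma 2.12: if `Ω ⊆ ℝⁿ` is open with finite measure and `U ⊆ Ω`
has positive measure with `|Ω \ U|/|Ω| ≤ α(Ω)/4`, then `α(U) ≥ α(Ω)/2`. -/
theorem asymmetry_propagation (n : ℕ)
    (Ω U : Set (EuclideanSpace ℝ (Fin n))) (hΩo : IsOpen Ω) (hΩf : volume Ω < ⊤)
    (hUΩ : U ⊆ Ω) (hUm : MeasurableSet U) (hUpos : 0 < volume U)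
    (h : (volume (Ω \ U)).toReal / (volume Ω).toReal ≤ asym Ω / 4) :
    asym Ω / 2 ≤ asym U :=
  asymmetry_propagation_general n Ω U hΩf hUΩ hUpos h
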